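/- (Identifiability for dense β*.) Under Assumption 1, the solution set S := {β ∈ ℝ^d : Cov(I,Y) = Cov(Ĩ,X̃)β} equals the singleton {β*} if and only if rank(Cov(I,X)) = d. In particular, a necessary condition for identifiability is m ≥ d. -/

import Mathlib

open MeasureTheory ProbabilityTheory Filter Matrix
open scoped Topology NNReal ENNReal

noncomputable section

/-- Cross-covariance matrix of two centered random vectors (equal to `E[U Vᵀ]`
for centered `U, V`). -/
def covMat {Ω : Type*} [MeasurableSpace Ω] (μ : Measure Ω) {ι κ : Type*}
    [Fintype ι] [Fintype κ] (U : Ω → ι → ℝ) (V : Ω → κ → ℝ) : Matrix ι κ ℝ :=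
  Matrix.of fun i j => ∫ ω, U ω i * V ω j ∂μ

/-- Cross-covariance vector of a centered random vector and a centered
random variable. -/
def covVec {Ω : Type*} [MeasurableSpace Ω] (μ : Measure Ω) {ι : Type*}
    [Fintype ι] (U : Ω → ι → ℝ) (Y : Ω → ℝ) : ι → ℝ :=
  fun i => ∫ ω, U ω i * Y ω ∂μ

/-- Variance (covariance) matrix of a random vector. -/
def varMat {Ω : Type*} [MeasurableSpace Ω] (μ : Measure Ω) {ι : Type*} [Fintype ι]
    (Z : Ω → ι → ℝ) : Matrix ι ι ℝ :=
  Matrix.of fun i j =>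
    ∫ ω, Z ω i * Z ω j ∂μ - (∫ ω, Z ω i ∂μ) * (∫ ω, Z ω j ∂μ)

/-- Euclidean (ℓ2) norm of a finite-dimensional real vector. -/
def norm2 {ι : Type*} [Fintype ι] (v : ι → ℝ) : ℝ := Real.sqrt (∑ i, v i ^ 2)

/-- ℓ0 "norm": number of nonzero entries. -/
def sparsity {ι : Type*} [Fintype ι] (v : ι → ℝ) : ℕ :=
  (Finset.univ.filter fun i => v i ≠ 0).card

/-- ℓ2 → ℓ2 operator norm of a real matrix. -/
def opNorm {ι κ : Type*} [Fintype ι] [Fintype κ] (A : Matrix ι κ ℝ) : ℝ :=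
  sSup {y : ℝ | ∃ x : κ → ℝ, norm2 x ≤ 1 ∧ y = norm2 (A *ᵥ x)}

/-! Under exogeneity `E[ε | I] = 0` the instrument is orthogonal to the noise, so
`Cov(I, Y) = Cov(I, X) β*` and, by Assumption 1 (i), `S` is the fibre of `β ↦ Cov(I, X) β`
through `β*`. That fibre is a singleton exactly when the matrix is injective, i.e. has full
column rank `d`; and the rank of an `m × d` matrix is at most `m`. -/

lemma AddMonoidHom.setOf_map_eq_eq_singleton_iff_injective {G H : Type*} [AddGroup G]
    [AddGroup H] (f : G →+ H) (b : G) : {x | f b = f x} = {b} ↔ Function.Injective f := by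
  refine ⟨fun hS => (injective_iff_map_eq_zero f).mpr fun v hv => ?_, fun hf => ?_⟩
  · have hbv : b + v ∈ {x | f b = f x} := by simp [hv]
    rw [hS, Set.mem_singleton_iff] at hbv
    simpa using hbv
  · ext x
    simp [hf.eq_iff, eq_comm]

namespace Matrix

variable {K : Type*} [Field K] {m n : Type*} [Fintype n]

lemma mulVec_injective_iff_rank_eq (A : Matrix m n K) :
    Function.Injective A.mulVec ↔ A.rank = Fintype.card n := by
  have hdim := A.mulVecLin.finrank_range_add_finrank_ker
  rw [Module.finrank_fintype_fun_eq_card] at hdim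
  rw [rank, ← coe_mulVecLin, ← LinearMap.ker_eq_bot, ← Submodule.finrank_eq_zero]
  omega

lemma setOf_mulVec_eq_eq_singleton_iff_rank_eq (A : Matrix m n K) (b : n → K) :
    {β | A *ᵥ b = A *ᵥ β} = {b} ↔ A.rank = Fintype.card n := by
  rw [← mulVec_injective_iff_rank_eq]
  exact A.mulVecLin.toAddMonoidHom.setOf_map_eq_eq_singleton_iff_injective b

end Matrix

section Covariance

variable {Ω : Type*} {mΩ : MeasurableSpace Ω} {μ : Measure Ω}

lemma integral_mul_eq_zero_of_condExp_eq_zero [IsFiniteMeasure μ] {m : MeasurableSpace Ω}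
    (hm : m ≤ mΩ) {g f : Ω → ℝ} (hg : StronglyMeasurable[m] g)
    (hgf : Integrable (g * f) μ) (hf : Integrable f μ) (hcond : μ[f | m] =ᵐ[μ] 0) :
    ∫ ω, g ω * f ω ∂μ = 0 := by
  have hpull : μ[g * f | m] =ᵐ[μ] 0 := by
    filter_upwards [condExp_mul_of_stronglyMeasurable_left hg hgf hf, hcond] with ω hω h0
    simp [hω, h0]
  calc ∫ ω, g ω * f ω ∂μ = ∫ ω, μ[g * f | m] ω ∂μ := (integral_condExp hm).symm
    _ = 0 := by simp [integral_congr_ae hpull]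

lemma covVec_eq_zero_of_condExp_eq_zero [IsFiniteMeasure μ] {ι : Type*} [Fintype ι]
    {U : Ω → ι → ℝ} {ε : Ω → ℝ} (hU : Measurable U) (hU2 : ∀ i, MemLp (fun ω => U ω i) 2 μ)
    (hε2 : MemLp ε 2 μ) (hexo : μ[ε | MeasurableSpace.comap U inferInstance] =ᵐ[μ] 0) :
    covVec μ U ε = 0 := by
  funext i
  have hUi : StronglyMeasurable[MeasurableSpace.comap U inferInstance] fun ω => U ω i :=
    ((measurable_pi_apply i).comp (comap_measurable U)).stronglyMeasurable
  exact integral_mul_eq_zero_of_condExp_eq_zero hU.comap_le hUi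
    ((hU2 i).integrable_mul hε2) (hε2.integrable one_le_two) hexo

lemma covVec_sum_mul_add {ι κ : Type*} [Fintype ι] [Fintype κ] {U : Ω → ι → ℝ}
    {X : Ω → κ → ℝ} {ε : Ω → ℝ} (hU2 : ∀ i, MemLp (fun ω => U ω i) 2 μ)
    (hX2 : ∀ j, MemLp (fun ω => X ω j) 2 μ) (hε2 : MemLp ε 2 μ) (β : κ → ℝ) :
    covVec μ U (fun ω => (∑ j, X ω j * β j) + ε ω) = covMat μ U X *ᵥ β + covVec μ U ε := by
  funext i
  have hUX : ∀ j, Integrable (fun ω => U ω i * X ω j * β j) μ :=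
    fun j => ((hU2 i).integrable_mul (hX2 j)).mul_const (β j)
  have hUε : Integrable (fun ω => U ω i * ε ω) μ := (hU2 i).integrable_mul hε2
  calc ∫ ω, U ω i * ((∑ j, X ω j * β j) + ε ω) ∂μ
      = ∫ ω, (∑ j, U ω i * X ω j * β j) + U ω i * ε ω ∂μ := by
        simp only [mul_add, Finset.mul_sum, mul_assoc]
    _ = (∑ j, (∫ ω, U ω i * X ω j ∂μ) * β j) + ∫ ω, U ω i * ε ω ∂μ := by
        rw [integral_add (integrable_finsetSum _ fun j _ => hUX j) hUε,
          integral_finsetSum _ fun j _ => hUX j]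
        simp only [integral_mul_const]
    _ = _ := by simp [covMat, covVec, mulVec, dotProduct]

end Covariance

theorem stmt_1_general
    (m d : ℕ) (βstar : Fin d → ℝ)
    (Ω : Type*) [MeasurableSpace Ω] (μ : Measure Ω) [IsProbabilityMeasure μ]
    (I : Ω → Fin m → ℝ) (X : Ω → Fin d → ℝ) (Y ε : Ω → ℝ)
    (It : Ω → Fin m → ℝ) (Xt : Ω → Fin d → ℝ)
    -- measurability and finite second moments
    (hImeas : Measurable I)
    (hI2 : ∀ i, MemLp (fun ω => I ω i) 2 μ)
    (hX2 : ∀ j, MemLp (fun ω => X ω j) 2 μ)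
    (hε2 : MemLp ε 2 μ)
    -- structural model Y = Xᵀβ* + ε
    (hmodel : ∀ ω, Y ω = (∑ j, X ω j * βstar j) + ε ω)
    -- Assumption 1 (i): Cov(Ĩ,X̃) = Cov(I,X)
    (hcov : covMat μ It Xt = covMat μ I X)
    -- Assumption 1 (ii): E[ε | I] = 0
    (hexo : μ[ε | MeasurableSpace.comap I inferInstance] =ᵐ[μ] 0) :
    ({β : Fin d → ℝ | covVec μ I Y = covMat μ It Xt *ᵥ β} = {βstar}
        ↔ (covMat μ I X).rank = d)
    ∧ ({β : Fin d → ℝ | covVec μ I Y = covMat μ It Xt *ᵥ β} = {βstar} → d ≤ m) := by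
  have hY : Y = fun ω => (∑ j, X ω j * βstar j) + ε ω := funext hmodel
  have hcovY : covVec μ I Y = covMat μ I X *ᵥ βstar := by
    rw [hY, covVec_sum_mul_add hI2 hX2 hε2,
      covVec_eq_zero_of_condExp_eq_zero hImeas hI2 hε2 hexo, add_zero]
  rw [hcov, hcovY, Matrix.setOf_mulVec_eq_eq_singleton_iff_rank_eq, Fintype.card_fin]
  exact ⟨Iff.rfl, fun hrank => hrank ▸ (covMat μ I X).rank_le_height⟩

/-- Identifiability for dense `β*`: under Assumption 1, the solution
set `S = {β : Cov(I,Y) = Cov(Ĩ,X̃) β}` equals `{β*}` iff `rank(Cov(I,X)) = d`;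
in particular `m ≥ d` is necessary for identifiability. -/
theorem stmt_1
    (m d : ℕ) (βstar : Fin d → ℝ)
    (Ω : Type*) [MeasurableSpace Ω] (μ : Measure Ω) [IsProbabilityMeasure μ]
    (I : Ω → Fin m → ℝ) (X : Ω → Fin d → ℝ) (Y ε : Ω → ℝ)
    (It : Ω → Fin m → ℝ) (Xt : Ω → Fin d → ℝ)
    -- measurability and finite second moments
    (hImeas : Measurable I)
    (hI2 : ∀ i, MemLp (fun ω => I ω i) 2 μ)
    (hX2 : ∀ j, MemLp (fun ω => X ω j) 2 μ)
    (hIt2 : ∀ i, MemLp (fun ω => It ω i) 2 μ)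
    (hXt2 : ∀ j, MemLp (fun ω => Xt ω j) 2 μ)
    (hY2 : MemLp Y 2 μ) (hε2 : MemLp ε 2 μ)
    -- all variables are centered
    (hIc : ∀ i, ∫ ω, I ω i ∂μ = 0)
    (hXc : ∀ j, ∫ ω, X ω j ∂μ = 0)
    (hItc : ∀ i, ∫ ω, It ω i ∂μ = 0)
    (hXtc : ∀ j, ∫ ω, Xt ω j ∂μ = 0)
    (hYc : ∫ ω, Y ω ∂μ = 0)
    -- structural model Y = Xᵀβ* + ε
    (hmodel : ∀ ω, Y ω = (∑ j, X ω j * βstar j) + ε ω)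
    -- Assumption 1 (i): Cov(Ĩ,X̃) = Cov(I,X)
    (hcov : covMat μ It Xt = covMat μ I X)
    -- Assumption 1 (ii): E[ε | I] = 0
    (hexo : μ[ε | MeasurableSpace.comap I inferInstance] =ᵐ[μ] 0) :
    ({β : Fin d → ℝ | covVec μ I Y = covMat μ It Xt *ᵥ β} = {βstar}
        ↔ (covMat μ I X).rank = d)
    ∧ ({β : Fin d → ℝ | covVec μ I Y = covMat μ It Xt *ᵥ β} = {βstar} → d ≤ m) :=
  stmt_1_general m d βstar Ω μ I X Y ε It Xt hImeas hI2 hX2 hε2 hmodel hcov hexo
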